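/- arXiv:2212.03148 — 2 statements merged into one kernel-verified Lean document; each statement's English description precedes it below -/
import Mathlib

section
/- Let d ≥ 3 be an integer and δ ≥ 3−d a real number, set λ_k = 2k + d − 3 + δ, μ_k = λ_k + δ, and M₀ = max{2, 4(d−3+δ)+1}. Let (c_k)_{k≥0} be real numbers such that ∑_{k≥0} c_k t^{λ_k} has radius of convergence R > 1, and let h(t) = ∑_{k≥0} c_k t^{λ_k} on [0,1]. Then there exist constants B > 0 and C > 0 (possibly depending on d, δ, R and (c_k)) such that for every ε ∈ (0,1]: if |∫₀¹ h(t) t^{λ_k} dt| ≤ ε for all k ≥ 0, then ∫₀^∞ e^{(2δ−1)α} (∑_{k≥0} c_k e^{−μ_k α})² dα ≤ B²ε + C · R^{1−d−δ} · ε^{(log R)/(log(9M₀/2))}. -/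
open MeasureTheory Real Set

/-- stability estimate for the weighted L² norm of the exponential
perturbation of the amplitude function. -/
theorem stmt_1 (d : ℕ) (hd : 3 ≤ d) (δ : ℝ) (hδ : 3 - (d : ℝ) ≤ δ)
    (c : ℕ → ℝ) (R : ℝ) (hR : 1 < R)
    (hconv : ∀ t : ℝ, 0 ≤ t → t < R →
      Summable (fun k : ℕ => |c k| * t ^ (2 * (k : ℝ) + d - 3 + δ)))
    (h : ℝ → ℝ)
    (hh : ∀ t ∈ Set.Ioc (0 : ℝ) 1,
      h t = ∑' k : ℕ, c k * t ^ (2 * (k : ℝ) + d - 3 + δ)) :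
    ∃ B > (0 : ℝ), ∃ C > (0 : ℝ), ∀ ε ∈ Set.Ioc (0 : ℝ) 1,
      (∀ k : ℕ, |∫ t in Set.Ioo (0 : ℝ) 1, h t * t ^ (2 * (k : ℝ) + d - 3 + δ)| ≤ ε) →
      (∫ α in Set.Ioi (0 : ℝ), Real.exp ((2 * δ - 1) * α) *
          (∑' k : ℕ, c k * Real.exp (-(2 * (k : ℝ) + d - 3 + 2 * δ) * α)) ^ 2) ≤
        B ^ 2 * ε + C * R ^ (1 - (d : ℝ) - δ) *
          ε ^ (Real.log R / Real.log (9 * max 2 (4 * ((d : ℝ) - 3 + δ) + 1) / 2)) := by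
  classical
  -- notation
  set L : ℕ → ℝ := fun k => 2 * (k : ℝ) + d - 3 + δ with hLdef
  have hL : ∀ k : ℕ, L k = 2 * (k : ℝ) + d - 3 + δ := fun k => rfl
  have hL0 : ∀ k : ℕ, 0 ≤ L k := by
    intro k
    have h1 : (0:ℝ) ≤ 2 * (k:ℝ) := by positivity
    have h2 : (0:ℝ) ≤ (d:ℝ) - 3 + δ := by linarith
    rw [hL]; linarith
  set g : ℝ → ℝ := fun t => ∑' k : ℕ, c k * t ^ L k with hgdef
  -- basic summability facts
  have hS : Summable fun k : ℕ => |c k| := by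
    have := hconv 1 (by norm_num) hR
    simpa [Real.one_rpow] using this
  set S : ℝ := ∑' k : ℕ, |c k| with hSdef
  have hS0 : 0 ≤ S := tsum_nonneg fun k => abs_nonneg _
  have habs : ∀ t : ℝ, 0 < t → ∀ k : ℕ, |c k * t ^ L k| = |c k| * t ^ L k := by
    intro t ht k
    rw [abs_mul, abs_of_nonneg (Real.rpow_nonneg ht.le _)]
  have hsumm : ∀ t : ℝ, 0 < t → t ≤ 1 → Summable fun k : ℕ => c k * t ^ L k := by
    intro t ht ht1
    have := hconv t ht.le (lt_of_le_of_lt ht1 hR)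
    refine Summable.of_abs ?_
    refine this.congr fun k => ?_
    rw [habs t ht k]
  have hterm_le : ∀ t : ℝ, 0 < t → t ≤ 1 → ∀ k : ℕ, |c k| * t ^ L k ≤ |c k| := by
    intro t ht ht1 k
    have := Real.rpow_le_one ht.le ht1 (hL0 k)
    calc |c k| * t ^ L k ≤ |c k| * 1 := by
          exact mul_le_mul_of_nonneg_left this (abs_nonneg _)
      _ = |c k| := mul_one _
  have hgb : ∀ t : ℝ, 0 < t → t ≤ 1 → |g t| ≤ S := by
    intro t ht ht1
    have h1 : Summable fun k : ℕ => |c k * t ^ L k| := by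
      have := hconv t ht.le (lt_of_le_of_lt ht1 hR)
      exact this.congr fun k => (habs t ht k).symm
    calc |g t| ≤ ∑' k : ℕ, |c k * t ^ L k| := by
          simpa only [Real.norm_eq_abs] using
            norm_tsum_le_tsum_norm (f := fun k : ℕ => c k * t ^ L k)
              (by simpa only [Real.norm_eq_abs] using h1)
      _ ≤ ∑' k : ℕ, |c k| := by
          refine Summable.tsum_le_tsum (fun k => ?_) h1 hS
          rw [habs t ht k]; exact hterm_le t ht ht1 k
      _ = S := rfl
  -- continuity of g on (0,1]
  have hgcont : ContinuousOn g (Ioc (0:ℝ) 1) := by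
    refine continuousOn_tsum (f := fun k : ℕ => fun t : ℝ => c k * t ^ L k)
      (u := fun k => |c k|) (fun k => ?_) hS (fun k t ht => ?_)
    · exact continuousOn_const.mul (continuousOn_id.rpow_const fun x hx => Or.inl (ne_of_gt hx.1))
    · rw [Real.norm_eq_abs, habs t ht.1 k]; exact hterm_le t ht.1 ht.2 k
  have hgcont' : ContinuousOn g (Ioo (0:ℝ) 1) := hgcont.mono Ioo_subset_Ioc_self
  have hgmeas : AEStronglyMeasurable g (volume.restrict (Ioo (0:ℝ) 1)) :=
    hgcont'.aestronglyMeasurable measurableSet_Ioo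
  -- change of variables: the weighted integral equals ∫_{(0,1)} g² dt
  have himg : (fun α : ℝ => Real.exp (-α)) '' Ioi (0:ℝ) = Ioo (0:ℝ) 1 := by
    ext y
    constructor
    · rintro ⟨α, hα, rfl⟩
      exact ⟨Real.exp_pos _, Real.exp_lt_one_iff.2 (by simpa using (mem_Ioi.1 hα))⟩
    · rintro ⟨hy0, hy1⟩
      refine ⟨-Real.log y, ?_, by simp [Real.exp_log hy0]⟩
      simpa using Real.log_neg hy0 hy1
  have hchg : (∫ t in Ioo (0:ℝ) 1, (g t) ^ 2) =
      ∫ α in Ioi (0:ℝ), Real.exp (-α) * (g (Real.exp (-α))) ^ 2 := by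
    rw [← himg]
    rw [MeasureTheory.integral_image_eq_integral_abs_deriv_smul measurableSet_Ioi
      (f' := fun α : ℝ => -Real.exp (-α)) ?_ ?_ (fun t => (g t) ^ 2)]
    · refine setIntegral_congr_fun measurableSet_Ioi fun α _ => ?_
      rw [abs_neg, abs_of_pos (Real.exp_pos _)]
      simp [smul_eq_mul]
    · intro x _
      have h1 : HasDerivAt (fun α : ℝ => Real.exp (-α)) (Real.exp (-x) * (-1)) x :=
        (Real.hasDerivAt_exp (-x)).comp x (hasDerivAt_neg x)
      have h2 : HasDerivAt (fun α : ℝ => Real.exp (-α)) (-Real.exp (-x)) x := by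
        simpa [mul_comm] using h1
      exact h2.hasDerivWithinAt
    · intro a _ b _ hab
      have := Real.exp_injective hab
      linarith [neg_injective this]
  -- pointwise identification of the integrand
  have hpt : ∀ α ∈ Ioi (0:ℝ),
      Real.exp ((2 * δ - 1) * α) *
        (∑' k : ℕ, c k * Real.exp (-(2 * (k : ℝ) + d - 3 + 2 * δ) * α)) ^ 2
      = Real.exp (-α) * (g (Real.exp (-α))) ^ 2 := by
    intro α hα
    have ht0 : 0 < Real.exp (-α) := Real.exp_pos _
    have hterm : ∀ k : ℕ, c k * Real.exp (-(2 * (k : ℝ) + d - 3 + 2 * δ) * α)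
        = (c k * (Real.exp (-α)) ^ L k) * (Real.exp (-α)) ^ δ := by
      intro k
      rw [Real.rpow_def_of_pos ht0, Real.rpow_def_of_pos ht0, Real.log_exp]
      rw [mul_assoc, ← Real.exp_add]
      congr 1
      rw [hL]; ring
    rw [tsum_congr hterm, tsum_mul_right]
    have e1 : (Real.exp (-α)) ^ δ = Real.exp (-α * δ) := by
      rw [Real.rpow_def_of_pos ht0, Real.log_exp]
    rw [e1]
    have e2 : Real.exp ((2 * δ - 1) * α) * (Real.exp (-α * δ)) ^ 2 = Real.exp (-α) := by
      rw [sq, ← Real.exp_add, ← Real.exp_add]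
      congr 1; ring
    calc Real.exp ((2 * δ - 1) * α) * (g (Real.exp (-α)) * Real.exp (-α * δ)) ^ 2
        = (Real.exp ((2 * δ - 1) * α) * (Real.exp (-α * δ)) ^ 2) * (g (Real.exp (-α))) ^ 2 := by
          ring
      _ = Real.exp (-α) * (g (Real.exp (-α))) ^ 2 := by rw [e2]
  -- conclusion: choose B = S + 1, C = 1
  refine ⟨S + 1, by linarith, 1, one_pos, ?_⟩
  rintro ε ⟨hε0, hε1⟩ hint
  -- bound ∫ g² ≤ S * ε
  set F : ℕ → ℝ → ℝ := fun k t => c k * (g t * t ^ L k) with hFdef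
  have hFmeas : ∀ k : ℕ, AEStronglyMeasurable (F k) (volume.restrict (Ioo (0:ℝ) 1)) := by
    intro k
    refine (aestronglyMeasurable_const.mul (hgmeas.mul ?_))
    exact (ContinuousOn.aestronglyMeasurable
      (continuousOn_id.rpow_const fun x hx => Or.inl (ne_of_gt hx.1)) measurableSet_Ioo)
  have hFbound : ∀ k : ℕ, ∀ᵐ t ∂(volume.restrict (Ioo (0:ℝ) 1)), ‖F k t‖ ≤ |c k| * S := by
    intro k
    rw [ae_restrict_iff' measurableSet_Ioo]
    refine Filter.Eventually.of_forall fun t ht => ?_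
    have h1 : |g t| ≤ S := hgb t ht.1 ht.2.le
    have h2 : t ^ L k ≤ 1 := Real.rpow_le_one ht.1.le ht.2.le (hL0 k)
    have h3 : 0 ≤ t ^ L k := Real.rpow_nonneg ht.1.le _
    rw [Real.norm_eq_abs, hFdef]
    simp only
    rw [abs_mul, abs_mul, abs_of_nonneg h3]
    calc |c k| * (|g t| * t ^ L k) ≤ |c k| * (S * 1) := by
          refine mul_le_mul_of_nonneg_left ?_ (abs_nonneg _)
          exact mul_le_mul h1 h2 h3 hS0
      _ = |c k| * S := by ring
  have hFint : ∀ k : ℕ, Integrable (F k) (volume.restrict (Ioo (0:ℝ) 1)) := by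
    intro k
    refine Integrable.mono' (integrable_const (|c k| * S)) (hFmeas k) (hFbound k)
  have hFnormint : ∀ k : ℕ,
      (∫ t in Ioo (0:ℝ) 1, ‖F k t‖) ≤ |c k| * S := by
    intro k
    have h1 : (∫ t in Ioo (0:ℝ) 1, ‖F k t‖) ≤ ∫ _t in Ioo (0:ℝ) 1, |c k| * S := by
      refine integral_mono_ae (hFint k).norm (integrable_const _) (hFbound k)
    calc (∫ t in Ioo (0:ℝ) 1, ‖F k t‖) ≤ ∫ _t in Ioo (0:ℝ) 1, |c k| * S := h1
      _ = (|c k| * S) * (volume (Ioo (0:ℝ) 1)).toReal := by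
          rw [setIntegral_const, smul_eq_mul, mul_comm]; rfl
      _ ≤ |c k| * S := by
          rw [Real.volume_Ioo]
          norm_num
  have hFsumm : Summable fun k : ℕ => ∫ t in Ioo (0:ℝ) 1, ‖F k t‖ := by
    refine Summable.of_nonneg_of_le (fun k => ?_) (fun k => hFnormint k) (hS.mul_right S)
    exact integral_nonneg fun t => norm_nonneg _
  have hswap : (∑' k : ℕ, ∫ t in Ioo (0:ℝ) 1, F k t) = ∫ t in Ioo (0:ℝ) 1, ∑' k : ℕ, F k t :=
    MeasureTheory.integral_tsum_of_summable_integral_norm hFint hFsumm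
  have hg2 : ∀ t ∈ Ioo (0:ℝ) 1, (g t) ^ 2 = ∑' k : ℕ, F k t := by
    intro t ht
    have h1 : (fun k : ℕ => F k t) = fun k : ℕ => g t * (c k * t ^ L k) := by
      funext k; rw [hFdef]; ring
    rw [h1, tsum_mul_left, sq]
  have hIeq : ∀ k : ℕ, (∫ t in Ioo (0:ℝ) 1, g t * t ^ L k)
      = ∫ t in Ioo (0:ℝ) 1, h t * t ^ (2 * (k : ℝ) + d - 3 + δ) := by
    intro k
    refine setIntegral_congr_fun measurableSet_Ioo fun t ht => ?_
    rw [hh t (Ioo_subset_Ioc_self ht), hL]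
  have hintF : ∀ k : ℕ, (∫ t in Ioo (0:ℝ) 1, F k t)
      = c k * ∫ t in Ioo (0:ℝ) 1, h t * t ^ (2 * (k : ℝ) + d - 3 + δ) := by
    intro k
    rw [hFdef]
    simp only
    rw [MeasureTheory.integral_const_mul, hIeq k]
  have hgsq : (∫ t in Ioo (0:ℝ) 1, (g t) ^ 2) ≤ S * ε := by
    rw [setIntegral_congr_fun measurableSet_Ioo hg2, ← hswap]
    have hb : ∀ k : ℕ, |(∫ t in Ioo (0:ℝ) 1, F k t)| ≤ |c k| * ε := by
      intro k
      rw [hintF k, abs_mul]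
      exact mul_le_mul_of_nonneg_left (hint k) (abs_nonneg _)
    have hsumF : Summable fun k : ℕ => ∫ t in Ioo (0:ℝ) 1, F k t := by
      refine Summable.of_abs ?_
      exact Summable.of_nonneg_of_le (fun k => abs_nonneg _) hb (hS.mul_right ε)
    calc (∑' k : ℕ, ∫ t in Ioo (0:ℝ) 1, F k t)
        ≤ ∑' k : ℕ, |c k| * ε := by
          refine Summable.tsum_le_tsum (fun k => ?_) hsumF (hS.mul_right ε)
          exact le_trans (le_abs_self _) (hb k)
      _ = S * ε := by rw [tsum_mul_right]
  -- put everything together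
  have hmain : (∫ α in Ioi (0:ℝ), Real.exp ((2 * δ - 1) * α) *
      (∑' k : ℕ, c k * Real.exp (-(2 * (k : ℝ) + d - 3 + 2 * δ) * α)) ^ 2) ≤ S * ε := by
    rw [setIntegral_congr_fun measurableSet_Ioi hpt, ← hchg]
    exact hgsq
  have hpos : 0 ≤ 1 * R ^ (1 - (d : ℝ) - δ) *
      ε ^ (Real.log R / Real.log (9 * max 2 (4 * ((d : ℝ) - 3 + δ) + 1) / 2)) := by
    have h1 : (0:ℝ) < R := lt_trans one_pos hR
    positivity
  have hB : S * ε ≤ (S + 1) ^ 2 * ε := by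
    have : S ≤ (S + 1) ^ 2 := by nlinarith
    exact mul_le_mul_of_nonneg_right this hε0.le
  linarith
end

section
/- Let 0 ≤ λ₀ < λ₁ < λ₂ < ⋯ be a strictly increasing sequence of nonnegative real numbers. For m ≥ 0 and 0 ≤ j ≤ m define C_{mj} = √(2λ_m + 1) · (∏_{r=0}^{m−1} (λ_j + λ_r + 1)) / (∏_{r=0, r≠j}^{m} (λ_j − λ_r)), with the convention that empty products equal 1, and define L_m(t) = ∑_{j=0}^m C_{mj} t^{λ_j} for t ∈ (0,1]. Then the family (L_m)_{m≥0} is orthonormal in L²((0,1)): for all m, n ≥ 0, ∫₀¹ L_m(t) L_n(t) dt = 1 if m = n and 0 otherwise. -/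
open MeasureTheory Real Set Polynomial Lagrange Finset

lemma muntz_prod_neg' (s : Finset ℕ) (g : ℕ → ℝ) :
    ∏ i ∈ s, (-g i) = (-1 : ℝ) ^ s.card * ∏ i ∈ s, g i := by
  rw [← Finset.prod_const, ← Finset.prod_mul_distrib]
  exact Finset.prod_congr rfl fun i _ => (neg_one_mul (g i)).symm

lemma muntz_int_rpow (a : ℝ) (ha : 0 ≤ a) :
    ∫ t in Set.Ioo (0:ℝ) 1, t ^ a = (a + 1)⁻¹ := by
  rw [← MeasureTheory.integral_Ioc_eq_integral_Ioo,
    ← intervalIntegral.integral_of_le (by norm_num : (0:ℝ) ≤ 1),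
    integral_rpow (Or.inl (by linarith))]
  rw [Real.one_rpow, Real.zero_rpow (by linarith)]
  ring

lemma muntz_integrable_rpow (a : ℝ) (ha : 0 ≤ a) :
    MeasureTheory.IntegrableOn (fun t : ℝ => t ^ a) (Set.Ioo (0:ℝ) 1) := by
  have h := intervalIntegral.intervalIntegrable_rpow' (a := 0) (b := 1) (r := a) (by linarith)
  rw [intervalIntegrable_iff_integrableOn_Ioc_of_le (by norm_num : (0:ℝ) ≤ 1)] at h
  exact h.mono_set Set.Ioo_subset_Ioc_self

lemma muntz_coeff_basis {s : Finset ℕ} {v : ℕ → ℝ} {i : ℕ} (hi : i ∈ s) :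
    (Lagrange.basis s v i).coeff (s.card - 1) = nodalWeight s v i := by
  have h : Lagrange.basis s v i = Polynomial.C (nodalWeight s v i) * nodal (s.erase i) v := by
    rw [basis_eq_prod_sub_inv_mul_nodal_div hi, nodal_erase_eq_nodal_div hi]
  rw [h, coeff_C_mul]
  have hd : (nodal (s.erase i) v).natDegree = s.card - 1 := by
    rw [natDegree_nodal, card_erase_of_mem hi]
  have := (nodal_monic (s := s.erase i) (v := v)).coeff_natDegree
  rw [hd] at this
  rw [this, mul_one]

lemma muntz_coeff_sum_eval {s : Finset ℕ} {v : ℕ → ℝ} (hvs : Set.InjOn v s) (f : ℝ[X])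
    (hdeg : f.degree < s.card) :
    ∑ i ∈ s, f.eval (v i) * nodalWeight s v i = f.coeff (s.card - 1) := by
  have hf := Lagrange.eq_interpolate hvs hdeg
  conv_rhs => rw [hf]
  rw [interpolate_apply, finset_sum_coeff]
  exact Finset.sum_congr rfl fun i hi => by rw [coeff_C_mul, muntz_coeff_basis hi]

section

variable (l : ℕ → ℝ) (hl0 : 0 ≤ l 0) (hmono : StrictMono l)
    (C : ℕ → ℕ → ℝ)
    (hC : ∀ m j, C m j = Real.sqrt (2 * l m + 1) *
      (∏ r ∈ Finset.range m, (l j + l r + 1)) /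
      (∏ r ∈ (Finset.range (m + 1)).erase j, (l j - l r)))

include hl0 hmono in
lemma muntz_partial_fraction (n : ℕ) (x : ℝ) (hx : 0 ≤ x) :
    ∑ k ∈ Finset.range (n + 1),
        (∏ r ∈ Finset.range n, (l k + l r + 1)) * nodalWeight (Finset.range (n+1)) l k
          * (x + l k + 1)⁻¹ =
      (∏ r ∈ Finset.range n, (x - l r)) * (∏ r ∈ Finset.range (n + 1), (x + l r + 1))⁻¹ := by
  have hlnn : ∀ k, 0 ≤ l k := fun k => le_trans hl0 (hmono.le_iff_le.2 (Nat.zero_le k))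
  set s : Finset ℕ := Finset.range (n + 1) with hs
  have hvs : Set.InjOn l s := fun a _ b _ h => hmono.injective h
  set f : ℝ[X] := ∏ r ∈ Finset.range n, (X + Polynomial.C (l r + 1)) with hf
  have hmon : f.Monic := monic_prod_of_monic _ _ fun r _ => monic_X_add_C _
  have hfdeg : f.natDegree = n := by
    rw [hf, natDegree_prod _ _ fun r _ => (monic_X_add_C _).ne_zero]
    simp only [natDegree_X_add_C]
    rw [Finset.sum_const, Finset.card_range, smul_eq_mul, mul_one]
  have hdeg : f.degree < s.card := by
    rw [degree_eq_natDegree hmon.ne_zero, hfdeg, hs, Finset.card_range]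
    exact_mod_cast Nat.lt_succ_self n
  set x0 : ℝ := -(x + 1) with hx0
  have hxnode : ∀ i ∈ s, x0 ≠ l i := by
    intro i _
    have := hlnn i
    intro h; rw [← h] at this; simp only [hx0] at this; linarith
  have key := Lagrange.eval_interpolate_not_at_node (s := s) (v := l)
      (fun i => f.eval (l i)) hxnode
  rw [← Lagrange.eq_interpolate hvs hdeg] at key
  have hevalf : f.eval x0 = (-1:ℝ)^n * ∏ r ∈ Finset.range n, (x - l r) := by
    rw [hf, eval_prod]
    have : ∀ r ∈ Finset.range n, eval x0 (X + Polynomial.C (l r + 1)) = -(x - l r) := by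
      intro r _; simp only [eval_add, eval_X, eval_C, hx0]; ring
    rw [Finset.prod_congr rfl this, muntz_prod_neg', Finset.card_range]
  have hevalnodal : eval x0 (nodal s l) =
      (-1:ℝ)^(n+1) * ∏ r ∈ s, (x + l r + 1) := by
    rw [eval_nodal]
    have : ∀ r ∈ s, x0 - l r = -(x + l r + 1) := by
      intro r _; simp only [hx0]; ring
    rw [Finset.prod_congr rfl this, muntz_prod_neg', hs, Finset.card_range]
  have hsum : (∑ i ∈ s, nodalWeight s l i * (x0 - l i)⁻¹ * f.eval (l i)) =
      -∑ k ∈ s, (∏ r ∈ Finset.range n, (l k + l r + 1)) * nodalWeight s l k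
          * (x + l k + 1)⁻¹ := by
    rw [← Finset.sum_neg_distrib]
    refine Finset.sum_congr rfl fun k _ => ?_
    have h1 : (x0 - l k)⁻¹ = -(x + l k + 1)⁻¹ := by
      rw [hx0, show -(x+1) - l k = -(x + l k + 1) by ring, inv_neg]
    have h2 : f.eval (l k) = ∏ r ∈ Finset.range n, (l k + l r + 1) := by
      rw [hf, eval_prod]
      exact Finset.prod_congr rfl fun r _ => by simp [add_assoc]
    rw [h1, h2]; ring
  rw [hevalf, hevalnodal, hsum] at key
  have hQ : (∏ r ∈ s, (x + l r + 1)) ≠ 0 :=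
    Finset.prod_ne_zero_iff.2 fun r _ => by have := hlnn r; positivity
  have hpow : ((-1:ℝ)^n) ≠ 0 := by positivity
  have key2 : (∏ r ∈ Finset.range n, (x - l r)) =
      (∏ r ∈ s, (x + l r + 1)) *
        ∑ k ∈ s, (∏ r ∈ Finset.range n, (l k + l r + 1)) * nodalWeight s l k
          * (x + l k + 1)⁻¹ := by
    apply mul_left_cancel₀ hpow
    rw [key, pow_succ]; ring
  rw [key2, mul_comm (∏ r ∈ s, (x + l r + 1)), mul_assoc, mul_inv_cancel₀ hQ, mul_one]

include hC in
lemma muntz_hCA (n k : ℕ) : C n k = Real.sqrt (2 * l n + 1) *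
    ((∏ r ∈ Finset.range n, (l k + l r + 1)) * nodalWeight (Finset.range (n+1)) l k) := by
  rw [hC, div_eq_mul_inv, nodalWeight, ← Finset.prod_inv_distrib, mul_assoc]

include hl0 hmono hC in
lemma muntz_inner_sum (n : ℕ) (x : ℝ) (hx : 0 ≤ x) :
    ∑ k ∈ Finset.range (n + 1), C n k * (x + l k + 1)⁻¹ =
      Real.sqrt (2 * l n + 1) *
        ((∏ r ∈ Finset.range n, (x - l r)) * (∏ r ∈ Finset.range (n + 1), (x + l r + 1))⁻¹) := by
  rw [← muntz_partial_fraction l hl0 hmono n x hx, Finset.mul_sum]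
  exact Finset.sum_congr rfl fun k _ => by rw [muntz_hCA l C hC]; ring

include hl0 hmono hC in
lemma muntz_diag (m : ℕ) :
    ∑ j ∈ Finset.range (m+1), ∑ k ∈ Finset.range (m+1),
      C m j * C m k * (l j + l k + 1)⁻¹ = 1 := by
  have hlnn : ∀ k, 0 ≤ l k := fun k => le_trans hl0 (hmono.le_iff_le.2 (Nat.zero_le k))
  have h2m : (0:ℝ) ≤ 2 * l m + 1 := by linarith [hlnn m]
  have step : ∀ j ∈ Finset.range (m+1),
      ∑ k ∈ Finset.range (m+1), C m j * C m k * (l j + l k + 1)⁻¹ =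
      C m j * (Real.sqrt (2 * l m + 1) *
        ((∏ r ∈ Finset.range m, (l j - l r)) *
          (∏ r ∈ Finset.range (m+1), (l j + l r + 1))⁻¹)) := by
    intro j _
    rw [← muntz_inner_sum l hl0 hmono C hC m (l j) (hlnn j), Finset.mul_sum]
    exact Finset.sum_congr rfl fun k _ => by ring
  rw [Finset.sum_congr rfl step,
    Finset.sum_eq_single_of_mem m (Finset.self_mem_range_succ m) ?_]
  · rw [hC m m]
    have herase : (Finset.range (m+1)).erase m = Finset.range m := by
      rw [Finset.range_add_one, Finset.erase_insert Finset.notMem_range_self]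
    rw [herase, Finset.prod_range_succ]
    have hP : (∏ r ∈ Finset.range m, (l m - l r)) ≠ 0 :=
      Finset.prod_ne_zero_iff.2 fun r hr =>
        ne_of_gt (sub_pos.2 (hmono (Finset.mem_range.1 hr)))
    have hQ : (∏ r ∈ Finset.range m, (l m + l r + 1)) ≠ 0 :=
      Finset.prod_ne_zero_iff.2 fun r _ =>
        ne_of_gt (by have h1 := hlnn m; have h2 := hlnn r; linarith)
    have h2 : l m + l m + 1 ≠ 0 := ne_of_gt (by have := hlnn m; linarith)
    have hs : Real.sqrt (2 * l m + 1) * Real.sqrt (2 * l m + 1) = 2 * l m + 1 :=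
      Real.mul_self_sqrt h2m
    field_simp
    rw [Real.sq_sqrt h2m, div_eq_one_iff_eq (by linarith [hlnn m])]; ring
  · intro j hj hne
    have hjm : j < m := lt_of_le_of_ne (Nat.lt_succ_iff.1 (Finset.mem_range.1 hj)) hne
    have hz : (∏ r ∈ Finset.range m, (l j - l r)) = 0 :=
      Finset.prod_eq_zero (Finset.mem_range.2 hjm) (sub_self _)
    rw [hz]; ring

include hl0 hmono hC in
lemma muntz_offdiag (m n : ℕ) (hnm : n < m) :
    ∑ j ∈ Finset.range (m+1), ∑ k ∈ Finset.range (n+1),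
      C m j * C n k * (l j + l k + 1)⁻¹ = 0 := by
  have hlnn : ∀ k, 0 ≤ l k := fun k => le_trans hl0 (hmono.le_iff_le.2 (Nat.zero_le k))
  have step : ∀ j ∈ Finset.range (m+1),
      ∑ k ∈ Finset.range (n+1), C m j * C n k * (l j + l k + 1)⁻¹ =
      C m j * (Real.sqrt (2 * l n + 1) *
        ((∏ r ∈ Finset.range n, (l j - l r)) *
          (∏ r ∈ Finset.range (n+1), (l j + l r + 1))⁻¹)) := by
    intro j _
    rw [← muntz_inner_sum l hl0 hmono C hC n (l j) (hlnn j), Finset.mul_sum]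
    exact Finset.sum_congr rfl fun k _ => by ring
  rw [Finset.sum_congr rfl step]
  have hsub : Finset.Icc n m ⊆ Finset.range (m+1) := fun j hj => by
    rw [Finset.mem_range]; have := (Finset.mem_Icc.1 hj).2; omega
  rw [← Finset.sum_subset hsub ?_]
  · -- sum over Icc n m is 0
    set G : Polynomial ℝ := ∏ r ∈ Finset.Ico (n+1) m, (X + Polynomial.C (l r + 1)) with hG
    have hGmon : G.Monic := monic_prod_of_monic _ _ fun r _ => monic_X_add_C _
    have hGdeg : G.natDegree = m - (n+1) := by
      rw [hG, natDegree_prod _ _ fun r _ => (monic_X_add_C _).ne_zero]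
      simp only [natDegree_X_add_C]
      rw [Finset.sum_const, Nat.card_Ico, smul_eq_mul, mul_one]
    have hcard : (Finset.Icc n m).card = m + 1 - n := Nat.card_Icc n m
    have hterm : ∀ j ∈ Finset.Icc n m,
        C m j * (Real.sqrt (2 * l n + 1) *
          ((∏ r ∈ Finset.range n, (l j - l r)) *
            (∏ r ∈ Finset.range (n+1), (l j + l r + 1))⁻¹)) =
        (Real.sqrt (2 * l m + 1) * Real.sqrt (2 * l n + 1)) *
          (G.eval (l j) * nodalWeight (Finset.Icc n m) l j) := by
      intro j hj
      obtain ⟨hnj, hjm⟩ := Finset.mem_Icc.1 hj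
      have hAm : (∏ r ∈ Finset.range m, (l j + l r + 1)) =
          (∏ r ∈ Finset.range (n+1), (l j + l r + 1)) *
            ∏ r ∈ Finset.Ico (n+1) m, (l j + l r + 1) := by
        simp only [Finset.range_eq_Ico]
        exact (Finset.prod_Ico_consecutive _ (Nat.zero_le (n+1)) (by omega : n+1 ≤ m)).symm
      have hBm : (Finset.range (m+1)).erase j =
          Finset.range n ∪ (Finset.Icc n m).erase j := by
        rw [Finset.range_eq_Ico,
          ← Finset.Ico_union_Ico_eq_Ico (Nat.zero_le n) (by omega : n ≤ m+1),
          Finset.Ico_add_one_right_eq_Icc, Finset.erase_union_distrib,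
          Finset.erase_eq_of_notMem (by simp; omega), ← Finset.range_eq_Ico]
      have hdisj : Disjoint (Finset.range n) ((Finset.Icc n m).erase j) := by
        rw [Finset.disjoint_left]
        intro a ha hb
        have := Finset.mem_range.1 ha
        have := (Finset.mem_Icc.1 (Finset.mem_of_mem_erase hb)).1
        omega
      have hGval : G.eval (l j) = ∏ r ∈ Finset.Ico (n+1) m, (l j + l r + 1) := by
        rw [hG, eval_prod]
        exact Finset.prod_congr rfl fun r _ => by simp [add_assoc]
      have hw : nodalWeight (Finset.Icc n m) l j =
          (∏ r ∈ (Finset.Icc n m).erase j, (l j - l r))⁻¹ := by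
        rw [nodalWeight, ← Finset.prod_inv_distrib]
      have hP : (∏ r ∈ Finset.range n, (l j - l r)) ≠ 0 :=
        Finset.prod_ne_zero_iff.2 fun r hr =>
          ne_of_gt (sub_pos.2 (hmono (lt_of_lt_of_le (Finset.mem_range.1 hr) hnj)))
      have hE : (∏ r ∈ (Finset.Icc n m).erase j, (l j - l r)) ≠ 0 :=
        Finset.prod_ne_zero_iff.2 fun r hr =>
          sub_ne_zero.2 (fun h => (Finset.mem_erase.1 hr).1 (hmono.injective h).symm)
      have hQn : (∏ r ∈ Finset.range (n+1), (l j + l r + 1)) ≠ 0 :=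
        Finset.prod_ne_zero_iff.2 fun r _ =>
          ne_of_gt (by have h1 := hlnn r; have h2 := hlnn j; linarith)
      rw [hC m j, hAm, hBm, Finset.prod_union hdisj, hGval, hw]
      field_simp
    rw [Finset.sum_congr rfl hterm, ← Finset.mul_sum,
      muntz_coeff_sum_eval (fun a _ b _ h => hmono.injective h) G ?_, hcard]
    · rw [Polynomial.coeff_eq_zero_of_natDegree_lt (by rw [hGdeg]; omega), mul_zero]
    · rw [degree_eq_natDegree hGmon.ne_zero, hGdeg, hcard]
      exact_mod_cast (by omega : m - (n+1) < m + 1 - n)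
  · intro j hj hnotin
    have hjn : j < n := by
      have h1 := Finset.mem_range.1 hj
      by_contra h
      exact hnotin (Finset.mem_Icc.2 ⟨by omega, by omega⟩)
    have hz : (∏ r ∈ Finset.range n, (l j - l r)) = 0 :=
      Finset.prod_eq_zero (Finset.mem_range.2 hjn) (sub_self _)
    rw [hz]; ring

include hl0 hmono in
lemma muntz_integral (L : ℕ → ℝ → ℝ)
    (hL : ∀ m, ∀ t ∈ Set.Ioc (0 : ℝ) 1,
      L m t = ∑ j ∈ Finset.range (m + 1), C m j * t ^ (l j)) (m n : ℕ) :
    ∫ t in Set.Ioo (0:ℝ) 1, L m t * L n t =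
      ∑ j ∈ Finset.range (m+1), ∑ k ∈ Finset.range (n+1),
        C m j * C n k * (l j + l k + 1)⁻¹ := by
  have hlnn : ∀ k, 0 ≤ l k := fun k => le_trans hl0 (hmono.le_iff_le.2 (Nat.zero_le k))
  have h1 : ∫ t in Set.Ioo (0:ℝ) 1, L m t * L n t =
      ∫ t in Set.Ioo (0:ℝ) 1, ∑ j ∈ Finset.range (m+1), ∑ k ∈ Finset.range (n+1),
        (C m j * C n k) * t ^ (l j + l k) := by
    refine setIntegral_congr_fun measurableSet_Ioo fun t ht => ?_
    rw [hL m t ⟨ht.1, le_of_lt ht.2⟩, hL n t ⟨ht.1, le_of_lt ht.2⟩, Finset.sum_mul_sum]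
    refine Finset.sum_congr rfl fun j _ => Finset.sum_congr rfl fun k _ => ?_
    rw [Real.rpow_add ht.1]; ring
  rw [h1, MeasureTheory.integral_finset_sum _ fun j _ =>
    MeasureTheory.integrable_finset_sum _ fun k _ =>
      ((muntz_integrable_rpow _ (add_nonneg (hlnn j) (hlnn k))).const_mul _)]
  refine Finset.sum_congr rfl fun j _ => ?_
  rw [MeasureTheory.integral_finset_sum _ fun k _ =>
    ((muntz_integrable_rpow _ (add_nonneg (hlnn j) (hlnn k))).const_mul _)]
  refine Finset.sum_congr rfl fun k _ => ?_
  rw [MeasureTheory.integral_const_mul, muntz_int_rpow _ (add_nonneg (hlnn j) (hlnn k)),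
    mul_assoc]

end

/-- orthonormality of the Müntz–Legendre polynomials in L²((0,1)). -/
theorem stmt_4 (l : ℕ → ℝ) (hl0 : 0 ≤ l 0) (hmono : StrictMono l)
    (C : ℕ → ℕ → ℝ)
    (hC : ∀ m j, C m j = Real.sqrt (2 * l m + 1) *
      (∏ r ∈ Finset.range m, (l j + l r + 1)) /
      (∏ r ∈ (Finset.range (m + 1)).erase j, (l j - l r)))
    (L : ℕ → ℝ → ℝ)
    (hL : ∀ m, ∀ t ∈ Set.Ioc (0 : ℝ) 1,
      L m t = ∑ j ∈ Finset.range (m + 1), C m j * t ^ (l j)) :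
    ∀ m n : ℕ,
      (∫ t in Set.Ioo (0 : ℝ) 1, L m t * L n t) = if m = n then 1 else 0 := by
  intro m n
  rw [muntz_integral l hl0 hmono C L hL m n]
  rcases lt_trichotomy m n with h | h | h
  · rw [if_neg h.ne]
    have hsymm : (∑ j ∈ Finset.range (m+1), ∑ k ∈ Finset.range (n+1),
          C m j * C n k * (l j + l k + 1)⁻¹) =
        ∑ k ∈ Finset.range (n+1), ∑ j ∈ Finset.range (m+1),
          C n k * C m j * (l k + l j + 1)⁻¹ := by
      rw [Finset.sum_comm]
      exact Finset.sum_congr rfl fun k _ => Finset.sum_congr rfl fun j _ => by ring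
    rw [hsymm, muntz_offdiag l hl0 hmono C hC n m h]
  · subst h
    rw [if_pos rfl, muntz_diag l hl0 hmono C hC m]
  · rw [if_neg h.ne', muntz_offdiag l hl0 hmono C hC m n h]
end
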